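/- arXiv:1502.00705 — 3 statements merged into one kernel-verified Lean document; each statement's English description precedes it below -/
import Mathlib

section
/- Let f = χ_Ω with ∂Ω contained in the zero set of a trigonometric polynomial μ with Fourier coefficients c[k], k ∈ Λ. Then for any first-order constant-coefficient differential operator D (a linear combination of ∂ₓ and ∂_y), the Fourier transform of Df satisfies the annihilation relation Σ_{k∈Λ} c[k] · (Df)^(ω − 2πk) = 0 for all ω ∈ ℝ². -/
open MeasureTheory

/-- A trigonometric polynomial, represented by its finitely supported Fourier
coefficients `c : ℤ² →₀ ℂ`; multiplication is convolution of coefficients. -/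
noncomputable def trigEval (μ : AddMonoidAlgebra ℂ (ℤ × ℤ)) (r : ℝ × ℝ) : ℂ :=
  ∑ k ∈ μ.coeff.support, μ.coeff k * Complex.exp (2 * Real.pi * Complex.I * (k.1 * r.1 + k.2 * r.2))

/-- The degree `(K, L)` of a trigonometric polynomial: the dimensions of the smallest
rectangle containing the frequency support. -/
noncomputable def tdeg (μ : AddMonoidAlgebra ℂ (ℤ × ℤ)) : ℤ × ℤ :=
  (((μ.coeff.support.image Prod.fst).max.unbotD 0) - ((μ.coeff.support.image Prod.fst).min.untopD 0) + 1,
   ((μ.coeff.support.image Prod.snd).max.unbotD 0) - ((μ.coeff.support.image Prod.snd).min.untopD 0) + 1)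

/-- The zero set of a trigonometric polynomial within the unit square `[0,1]²`. -/
def zeroSet (μ : AddMonoidAlgebra ℂ (ℤ × ℤ)) : Set (ℝ × ℝ) :=
  {r | r ∈ Set.Icc ((0:ℝ), (0:ℝ)) (1, 1) ∧ trigEval μ r = 0}

/-- A simply connected region `Ω ⊆ [0,1]²` whose boundary `∂Ω = frontier Ω` is a
piecewise smooth (piecewise C¹) simple closed curve. -/
def IsPSRegion (Ω : Set (ℝ × ℝ)) : Prop :=
  IsOpen Ω ∧ Ω ⊆ Set.Icc ((0:ℝ), (0:ℝ)) (1, 1) ∧ SimplyConnectedSpace ↥Ω ∧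
  ∃ γ : ℝ → ℝ × ℝ, ContinuousOn γ (Set.Icc 0 1) ∧ γ 0 = γ 1 ∧
    Set.InjOn γ (Set.Ico 0 1) ∧ frontier Ω = γ '' Set.Icc 0 1 ∧
    ∃ S : Finset ℝ, ∀ t ∈ Set.Icc (0:ℝ) 1 \ (S : Set ℝ), DifferentiableAt ℝ γ t

/-- The (distributional) Fourier transform of `Df`, where `f = χ_Ω` and `D = a∂ₓ + b∂_y`:
`(Df)^(ω) = i(aω₁ + bω₂) ∫_Ω e^{-i⟨ω,r⟩} dr`. -/
noncomputable def hatDchi (a b : ℂ) (Ω : Set (ℝ × ℝ)) (ω : ℝ × ℝ) : ℂ :=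
  Complex.I * (a * ω.1 + b * ω.2) *
    ∫ r in Ω, Complex.exp (-Complex.I * (ω.1 * r.1 + ω.2 * r.2))

/-!
Put `g = μ · e^{-i⟨ω,·⟩}`; by the modulation identity `g = ∑ c[k] e^{-i⟨ω - 2πk,·⟩}`, and `g`
vanishes on `∂Ω`. Every horizontal or vertical slice of `Ω` is a countable disjoint union of open
intervals whose endpoints lie on `∂Ω`, so the fundamental theorem of calculus on each interval and
Fubini give `∫_Ω ∂ₓg = ∫_Ω ∂_y g = 0`. Since `∂ₓ e^{-i⟨ξ,·⟩} = -iξ₁ e^{-i⟨ξ,·⟩}` (and likewise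
for `∂_y`), `a ∫_Ω ∂ₓg + b ∫_Ω ∂_y g` equals `-∑ c[k] (Df)^(ω - 2πk)`.
-/

open Set Complex Bornology

theorem Continuous.integrableOn_of_isBounded {X E : Type*} [MetricSpace X] [ProperSpace X]
    [MeasurableSpace X] [OpensMeasurableSpace X] {μ : Measure X} [IsFiniteMeasureOnCompacts μ]
    [NormedAddCommGroup E] {f : X → E} (hf : Continuous f) {s : Set X}
    (hs : IsBounded s) : IntegrableOn f s μ :=
  (hf.continuousOn.integrableOn_compact hs.isCompact_closure).mono_set subset_closure

theorem IsOpen.csInf_notMem {α : Type*} [ConditionallyCompleteLinearOrder α] [TopologicalSpace α]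
    [OrderTopology α] [DenselyOrdered α] [NoMinOrder α] {s : Set α} (hs : IsOpen s)
    (hb : BddBelow s) : sInf s ∉ s := by
  intro hmem
  obtain ⟨l, hl, hls⟩ := exists_Ioc_subset_of_mem_nhds (hs.mem_nhds hmem) (exists_lt _)
  obtain ⟨z, hlz, hz⟩ := exists_between hl
  exact (csInf_le hb (hls ⟨hlz, hz.le⟩)).not_gt hz

theorem IsOpen.csSup_notMem {α : Type*} [ConditionallyCompleteLinearOrder α] [TopologicalSpace α]
    [OrderTopology α] [DenselyOrdered α] [NoMaxOrder α] {s : Set α} (hs : IsOpen s)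
    (hb : BddAbove s) : sSup s ∉ s :=
  IsOpen.csInf_notMem (α := αᵒᵈ) hs hb

theorem IsOpen.eq_Ioo_csInf_csSup {α : Type*} [ConditionallyCompleteLinearOrder α]
    [TopologicalSpace α] [OrderTopology α] [DenselyOrdered α] [NoMinOrder α] [NoMaxOrder α]
    {s : Set α} (hs : IsOpen s) (hc : IsConnected s) (hbb : BddBelow s) (hba : BddAbove s) :
    s = Ioo (sInf s) (sSup s) := by
  refine (hc.Ioo_csInf_csSup_subset hbb hba).antisymm' fun x hx => ?_
  obtain ⟨hxl, hxu⟩ := subset_Icc_csInf_csSup hbb hba hx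
  exact ⟨hxl.lt_of_ne (ne_of_mem_of_not_mem hx (hs.csInf_notMem hbb)).symm,
    hxu.lt_of_ne (ne_of_mem_of_not_mem hx (hs.csSup_notMem hba))⟩

theorem IsOpen.frontier_connectedComponentIn_subset {X : Type*} [TopologicalSpace X]
    [LocallyConnectedSpace X] {U : Set X} (hU : IsOpen U) (x : X) :
    frontier (connectedComponentIn U x) ⊆ frontier U := by
  have hC : IsOpen (connectedComponentIn U x) := hU.connectedComponentIn
  intro z hz
  rw [hC.frontier_eq] at hz
  rw [hU.frontier_eq]
  refine ⟨closure_mono (connectedComponentIn_subset U x) hz.1, fun hzU => hz.2 ?_⟩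
  obtain ⟨w, hwz, hwx⟩ := mem_closure_iff.1 hz.1 _ hU.connectedComponentIn
    (mem_connectedComponentIn hzU)
  rw [connectedComponentIn_eq hwx, ← connectedComponentIn_eq hwz]
  exact mem_connectedComponentIn hzU

theorem IsOpen.setIntegral_eq_zero_of_forall_connectedComponentIn {X E : Type*}
    [TopologicalSpace X] [LocallyConnectedSpace X] [TopologicalSpace.SeparableSpace X]
    [MeasurableSpace X] [OpensMeasurableSpace X] [NormedAddCommGroup E] [NormedSpace ℝ E]
    {μ : Measure X} {U : Set X} (hU : IsOpen U) {f : X → E} (hf : IntegrableOn f U μ)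
    (h : ∀ x ∈ U, ∫ y in connectedComponentIn U x, f y ∂μ = 0) :
    ∫ x in U, f x ∂μ = 0 := by
  set C : Set (Set X) := connectedComponentIn U '' U
  have hdisj : C.PairwiseDisjoint id := by
    rintro _ ⟨x, -, rfl⟩ _ ⟨y, -, rfl⟩ hxy
    refine disjoint_left.2 fun z hzx hzy => hxy ?_
    rw [connectedComponentIn_eq hzx, connectedComponentIn_eq hzy]
  have : Countable C := by
    refine (hdisj.countable_of_isOpen ?_ ?_).to_subtype
    · rintro _ ⟨x, -, rfl⟩
      exact hU.connectedComponentIn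
    · rintro _ ⟨x, hx, rfl⟩
      exact ⟨x, mem_connectedComponentIn hx⟩
  have hUC : U = ⋃ s : C, (s : Set X) := by
    rw [iUnion_subtype, biUnion_image]
    exact (iUnion₂_subset fun x _ => connectedComponentIn_subset U x).antisymm'
      fun x hx => mem_iUnion₂.2 ⟨x, hx, mem_connectedComponentIn hx⟩
  rw [hUC, integral_iUnion (s := fun s : C => (s : Set X)) ?_
    (fun s t hst => hdisj s.2 t.2 (Subtype.coe_ne_coe.2 hst)) (hUC ▸ hf)]
  · refine (tsum_congr fun ⟨_, x, hx, hs⟩ => ?_).trans tsum_zero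
    exact hs ▸ h x hx
  · rintro ⟨_, x, -, rfl⟩
    exact hU.connectedComponentIn.measurableSet

theorem IsOpen.setIntegral_deriv_eq_zero {E : Type*} [NormedAddCommGroup E] [NormedSpace ℝ E]
    [CompleteSpace E] {U : Set ℝ} (hU : IsOpen U) (hb : IsBounded U) {φ φ' : ℝ → E}
    (hd : ∀ x, HasDerivAt φ (φ' x) x) (hc : Continuous φ') (h0 : ∀ x ∈ frontier U, φ x = 0) :
    ∫ x in U, φ' x = 0 := by
  refine hU.setIntegral_eq_zero_of_forall_connectedComponentIn (hc.integrableOn_of_isBounded hb)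
    fun x hx => ?_
  set C := connectedComponentIn U x
  have hCb : IsBounded C := hb.subset (connectedComponentIn_subset U x)
  have hC : C = Ioo (sInf C) (sSup C) := hU.connectedComponentIn.eq_Ioo_csInf_csSup
    (isConnected_connectedComponentIn_iff.2 hx) hCb.bddBelow hCb.bddAbove
  have hpq : sInf C < sSup C := nonempty_Ioo.1 (hC ▸ ⟨x, mem_connectedComponentIn hx⟩)
  have hfr : frontier C = {sInf C, sSup C} := by
    conv_lhs => rw [hC]
    exact frontier_Ioo hpq
  have hfrU : frontier C ⊆ frontier U := hU.frontier_connectedComponentIn_subset x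
  rw [hC, ← integral_Ioc_eq_integral_Ioo, ← intervalIntegral.integral_of_le hpq.le,
    intervalIntegral.integral_eq_sub_of_hasDerivAt (fun y _ => hd y) (hc.intervalIntegrable _ _),
    h0 _ (hfrU (by simp [hfr])), h0 _ (hfrU (by simp [hfr])), sub_zero]

theorem IsOpen.setIntegral_partialDeriv_fst_eq_zero {E : Type*} [NormedAddCommGroup E]
    [NormedSpace ℝ E] [CompleteSpace E] {Ω : Set (ℝ × ℝ)} (hΩ : IsOpen Ω)
    (hb : IsBounded Ω) {g g' : ℝ × ℝ → E}
    (hd : ∀ x y, HasDerivAt (fun t => g (t, y)) (g' (x, y)) x) (hc : Continuous g')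
    (h0 : ∀ r ∈ frontier Ω, g r = 0) :
    ∫ r in Ω, g' r = 0 := by
  have hm : MeasurableSet Ω := hΩ.measurableSet
  have hint : Integrable (Ω.indicator g') (volume.prod volume) :=
    (integrable_indicator_iff hm).2 (hc.integrableOn_of_isBounded hb)
  have hslice : ∀ y, ∫ x, Ω.indicator g' (x, y) = 0 := fun y => by
    have hcont : Continuous fun t : ℝ => (t, y) := by fun_prop
    refine (integral_indicator (hΩ.preimage hcont).measurableSet).trans
      ((hΩ.preimage hcont).setIntegral_deriv_eq_zero
        (hb.image_fst.subset fun t ht => ⟨_, ht, rfl⟩) (hd · y) (hc.comp hcont)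
        fun t ht => h0 _ (hcont.frontier_preimage_subset Ω ht))
  rw [← integral_indicator hm, Measure.volume_eq_prod, integral_prod_symm _ hint]
  simp only [hslice, integral_zero]

theorem IsOpen.setIntegral_partialDeriv_snd_eq_zero {E : Type*} [NormedAddCommGroup E]
    [NormedSpace ℝ E] [CompleteSpace E] {Ω : Set (ℝ × ℝ)} (hΩ : IsOpen Ω)
    (hb : IsBounded Ω) {g g' : ℝ × ℝ → E}
    (hd : ∀ x y, HasDerivAt (fun t => g (x, t)) (g' (x, y)) y) (hc : Continuous g')
    (h0 : ∀ r ∈ frontier Ω, g r = 0) :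
    ∫ r in Ω, g' r = 0 := by
  have hswap : ∫ r in Prod.swap ⁻¹' Ω, g' r.swap = ∫ r in Ω, g' r :=
    Measure.measurePreserving_swap.setIntegral_preimage_emb
      MeasurableEquiv.prodComm.measurableEmbedding g' Ω
  rw [← hswap]
  exact (hΩ.preimage continuous_swap).setIntegral_partialDeriv_fst_eq_zero
    ((hb.image_snd.prod hb.image_fst).subset fun r hr => ⟨⟨_, hr, rfl⟩, ⟨_, hr, rfl⟩⟩)
    (g := g ∘ Prod.swap) (fun x y => hd y x) (hc.comp continuous_swap)
    fun r hr => h0 _ (continuous_swap.frontier_preimage_subset Ω hr)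

noncomputable def planeWave (ξ r : ℝ × ℝ) : ℂ :=
  exp (-I * (ξ.1 * r.1 + ξ.2 * r.2))

theorem continuous_planeWave (ξ : ℝ × ℝ) : Continuous (planeWave ξ) := by
  unfold planeWave; fun_prop

theorem hasDerivAt_planeWave_fst (ξ : ℝ × ℝ) (x y : ℝ) :
    HasDerivAt (fun t => planeWave ξ (t, y)) (-I * ξ.1 * planeWave ξ (x, y)) x := by
  have h : HasDerivAt (fun t : ℝ => -I * (ξ.1 * (t : ℂ) + ξ.2 * y)) (-I * ξ.1) x := by
    simpa using (((hasDerivAt_id x).ofReal_comp.const_mul (ξ.1 : ℂ)).add_const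
      (ξ.2 * y : ℂ)).const_mul (-I)
  simpa only [planeWave, mul_comm] using h.cexp

theorem hasDerivAt_planeWave_snd (ξ : ℝ × ℝ) (x y : ℝ) :
    HasDerivAt (fun t => planeWave ξ (x, t)) (-I * ξ.2 * planeWave ξ (x, y)) y := by
  have h : HasDerivAt (fun t : ℝ => -I * (ξ.1 * x + ξ.2 * (t : ℂ))) (-I * ξ.2) y := by
    simpa using (((hasDerivAt_id y).ofReal_comp.const_mul (ξ.2 : ℂ)).const_add
      (ξ.1 * x : ℂ)).const_mul (-I)
  simpa only [planeWave, mul_comm] using h.cexp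

theorem hatDchi_eq (a b : ℂ) (Ω : Set (ℝ × ℝ)) (ξ : ℝ × ℝ) :
    hatDchi a b Ω ξ = I * (a * ξ.1 + b * ξ.2) * ∫ r in Ω, planeWave ξ r :=
  rfl

theorem planeWave_mul_trigEval (μ : AddMonoidAlgebra ℂ (ℤ × ℤ)) (ω r : ℝ × ℝ) :
    planeWave ω r * trigEval μ r = ∑ k ∈ μ.coeff.support,
      μ.coeff k * planeWave (ω.1 - 2 * Real.pi * k.1, ω.2 - 2 * Real.pi * k.2) r := by
  rw [trigEval, Finset.mul_sum]
  refine Finset.sum_congr rfl fun k _ => ?_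
  rw [planeWave, planeWave, mul_left_comm, ← exp_add]
  push_cast
  ring_nf

theorem integral_sum_mul_planeWave {ι : Type*} {Ω : Set (ℝ × ℝ)} (hb : IsBounded Ω)
    (s : Finset ι) (c : ι → ℂ) (ξ : ι → ℝ × ℝ) :
    ∫ r in Ω, ∑ i ∈ s, c i * planeWave (ξ i) r = ∑ i ∈ s, c i * ∫ r in Ω, planeWave (ξ i) r := by
  rw [integral_finsetSum _ fun i _ =>
    ((continuous_planeWave (ξ i)).integrableOn_of_isBounded hb).const_mul (c i)]
  simp only [integral_const_mul]

theorem sum_mul_hatDchi_eq_zero {ι : Type*} {Ω : Set (ℝ × ℝ)} (hΩ : IsOpen Ω)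
    (hb : IsBounded Ω) (s : Finset ι) (w : ι → ℂ) (ξ : ι → ℝ × ℝ) (a b : ℂ)
    (h0 : ∀ r ∈ frontier Ω, ∑ i ∈ s, w i * planeWave (ξ i) r = 0) :
    ∑ i ∈ s, w i * hatDchi a b Ω (ξ i) = 0 := by
  set J := fun i => ∫ r in Ω, planeWave (ξ i) r
  have hcont : ∀ c : ι → ℂ, Continuous fun r => ∑ i ∈ s, c i * planeWave (ξ i) r := fun c =>
    continuous_finsetSum _ fun i _ => continuous_const.mul (continuous_planeWave (ξ i))
  have hx : ∑ i ∈ s, w i * (-I * (ξ i).1) * J i = 0 := by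
    rw [← integral_sum_mul_planeWave hb]
    refine hΩ.setIntegral_partialDeriv_fst_eq_zero hb (fun x y => ?_) (hcont _) h0
    simpa only [mul_assoc] using HasDerivAt.fun_sum fun i _ =>
      (hasDerivAt_planeWave_fst (ξ i) x y).const_mul (w i)
  have hy : ∑ i ∈ s, w i * (-I * (ξ i).2) * J i = 0 := by
    rw [← integral_sum_mul_planeWave hb]
    refine hΩ.setIntegral_partialDeriv_snd_eq_zero hb (fun x y => ?_) (hcont _) h0
    simpa only [mul_assoc] using HasDerivAt.fun_sum fun i _ =>
      (hasDerivAt_planeWave_snd (ξ i) x y).const_mul (w i)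
  calc ∑ i ∈ s, w i * hatDchi a b Ω (ξ i)
      = -(a * ∑ i ∈ s, w i * (-I * (ξ i).1) * J i + b * ∑ i ∈ s, w i * (-I * (ξ i).2) * J i) := by
        rw [Finset.mul_sum, Finset.mul_sum, ← Finset.sum_add_distrib, ← Finset.sum_neg_distrib]
        refine Finset.sum_congr rfl fun i _ => ?_
        rw [hatDchi_eq]
        ring
    _ = 0 := by rw [hx, hy]; ring

/-- **Annihilation property for first-order derivatives of `χ_Ω`.**
Let `f = χ_Ω` for a simply connected region `Ω ⊆ [0,1]²` with piecewise smooth boundary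
contained in the zero set of a trigonometric polynomial `μ` with Fourier coefficients
`c[k] = μ k`, `k ∈ Λ = μ.support`. Then for any first-order constant-coefficient
differential operator `D = a∂ₓ + b∂_y`, the Fourier transform of `Df` satisfies
`∑_{k∈Λ} c[k] (Df)^(ω − 2πk) = 0` for all `ω ∈ ℝ²`. -/
theorem annihilation_first_order_char
    (Ω : Set (ℝ × ℝ)) (hΩ : IsPSRegion Ω)
    (μ : AddMonoidAlgebra ℂ (ℤ × ℤ))
    (hμ : ∀ r ∈ frontier Ω, trigEval μ r = 0)
    (a b : ℂ) :
    ∀ ω : ℝ × ℝ,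
      ∑ k ∈ μ.coeff.support, μ.coeff k *
        hatDchi a b Ω (ω.1 - 2 * Real.pi * k.1, ω.2 - 2 * Real.pi * k.2) = 0 := by
  obtain ⟨hopen, hsub, -⟩ := hΩ
  intro ω
  refine sum_mul_hatDchi_eq_zero hopen ((Metric.isBounded_Icc _ _).subset hsub) _ _ _ a b
    fun r hr => ?_
  rw [← planeWave_mul_trigEval, hμ r hr, mul_zero]
end

section
/- Let f = g·χ_Ω where D is a first-order constant-coefficient differential operator, Dg = 0 on a neighborhood of Ω, and the trigonometric polynomial μ vanishes on ∂Ω. Then μ·Df = 0 as distributions, and hence the Fourier coefficients c[k] of μ annihilate (Df)^ by convolution: Σ_{k∈Λ} c[k](Df)^(ω−2πk) = 0 for all ω. -/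
open MeasureTheory

/-- The first-order constant-coefficient differential operator `D = a∂ₓ + b∂_y`. -/
noncomputable def Dop (a b : ℂ) (h : ℝ × ℝ → ℂ) (r : ℝ × ℝ) : ℂ :=
  a * fderiv ℝ h r (1, 0) + b * fderiv ℝ h r (0, 1)

/-- The (distributional) Fourier transform of `Df`, where `f = g·χ_Ω` and
`D = a∂ₓ + b∂_y`: `(Df)^(ω) = i(aω₁ + bω₂) ∫_Ω g(r) e^{-i⟨ω,r⟩} dr`. -/
noncomputable def hatDf (a b : ℂ) (g : ℝ × ℝ → ℂ) (Ω : Set (ℝ × ℝ)) (ω : ℝ × ℝ) : ℂ :=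
  Complex.I * (a * ω.1 + b * ω.2) *
    ∫ r in Ω, g r * Complex.exp (-Complex.I * (ω.1 * r.1 + ω.2 * r.2))

open Set

lemma coord1_contDiff : ContDiff ℝ (⊤ : ℕ∞) (fun s : ℝ × ℝ => (s.1 : ℂ)) :=
  Complex.ofRealCLM.contDiff.comp contDiff_fst

lemma coord2_contDiff : ContDiff ℝ (⊤ : ℕ∞) (fun s : ℝ × ℝ => (s.2 : ℂ)) :=
  Complex.ofRealCLM.contDiff.comp contDiff_snd

lemma trig_contDiff (μ : AddMonoidAlgebra ℂ (ℤ × ℤ)) : ContDiff ℝ (⊤ : ℕ∞) (trigEval μ) := by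
  unfold trigEval
  apply ContDiff.sum
  intro k _
  exact contDiff_const.mul (Complex.contDiff_exp.comp
    (contDiff_const.mul ((contDiff_const.mul coord1_contDiff).add
      (contDiff_const.mul coord2_contDiff))))

noncomputable def expCLM (α β : ℂ) : (ℝ × ℝ) →L[ℝ] ℂ :=
  α • (Complex.ofRealCLM.comp (ContinuousLinearMap.fst ℝ ℝ ℝ)) +
  β • (Complex.ofRealCLM.comp (ContinuousLinearMap.snd ℝ ℝ ℝ))

lemma expCLM_apply (α β : ℂ) (v : ℝ × ℝ) : expCLM α β v = α * v.1 + β * v.2 := by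
  simp [expCLM, smul_eq_mul]

lemma expo_hasFDerivAt (α β : ℂ) (r : ℝ × ℝ) :
    HasFDerivAt (fun s : ℝ × ℝ => Complex.exp (α * s.1 + β * s.2))
      (Complex.exp (α * r.1 + β * r.2) • expCLM α β) r := by
  have h1 : (fun s : ℝ × ℝ => (α * s.1 + β * s.2 : ℂ)) = ⇑(expCLM α β) := by
    funext s; rw [expCLM_apply]
  have := ((expCLM α β).hasFDerivAt (x := r)).cexp
  rw [← h1] at this
  convert this using 2

lemma oneD (s : Set ℝ) (hs : IsOpen s) (hb : s ⊆ Set.Icc 0 1) (u u' : ℝ → ℂ)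
    (hu : ∀ x, HasDerivAt u (u' x) x) (hu' : Continuous u')
    (h0 : ∀ x, x ∈ closure s → x ∉ s → u x = 0) : ∫ x in s, u' x = 0 := by
  classical
  set T : Set (Set ℝ) := {t | ∃ x ∈ s, t = connectedComponentIn s x} with hT
  have hopen : ∀ t ∈ T, IsOpen t := by
    rintro t ⟨x, hx, rfl⟩; exact hs.connectedComponentIn
  have hne : ∀ t ∈ T, t.Nonempty := by
    rintro t ⟨x, hx, rfl⟩; exact ⟨x, mem_connectedComponentIn hx⟩
  have hdisj : T.PairwiseDisjoint id := by
    rintro t₁ ⟨x, hx, rfl⟩ t₂ ⟨y, hy, rfl⟩ hne12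
    refine Set.disjoint_left.2 fun z hz1 hz2 => hne12 ?_
    simp only [id] at hz1 hz2
    rw [connectedComponentIn_eq hz1, connectedComponentIn_eq hz2]
  have hcount : T.Countable := hdisj.countable_of_isOpen hopen hne
  have hUnion : ⋃ (t : T), (t : Set ℝ) = s := by
    apply subset_antisymm
    · rintro z hz
      obtain ⟨⟨t, x, hx, rfl⟩, hzt⟩ := Set.mem_iUnion.1 hz
      exact connectedComponentIn_subset s x hzt
    · intro z hz
      exact Set.mem_iUnion.2 ⟨⟨connectedComponentIn s z, ⟨z, hz, rfl⟩⟩,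
        mem_connectedComponentIn hz⟩
  have := hcount.to_subtype
  have hint : IntegrableOn u' s := by
    exact (hu'.continuousOn.integrableOn_compact isCompact_Icc).mono_set hb
  have key : ∀ t : T, ∫ x in (t : Set ℝ), u' x = 0 := by
    rintro ⟨t, x, hx, rfl⟩
    show (∫ z in connectedComponentIn s x, u' z) = 0
    set A := connectedComponentIn s x with hA
    have hAo : IsOpen A := hs.connectedComponentIn
    have hAs : A ⊆ s := connectedComponentIn_subset s x
    have hAne : A.Nonempty := ⟨x, mem_connectedComponentIn hx⟩
    have hAb : BddBelow A ∧ BddAbove A := by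
      constructor
      · exact ⟨0, fun z hz => (hb (hAs hz)).1⟩
      · exact ⟨1, fun z hz => (hb (hAs hz)).2⟩
    set p := sInf A with hp
    set q := sSup A with hq
    have hpc : p ∈ closure A := csInf_mem_closure hAne hAb.1
    have hqc : q ∈ closure A := csSup_mem_closure hAne hAb.2
    have hpA : p ∉ A := by
      intro hpA
      obtain ⟨ε, hε, hball⟩ := Metric.isOpen_iff.1 hAo p hpA
      have : p - ε/2 ∈ A := hball (show dist (p - ε/2) p < ε by
        rw [Real.dist_eq, show p - ε/2 - p = -(ε/2) by ring, abs_neg,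
          abs_of_nonneg (by linarith)]; linarith)
      have := csInf_le hAb.1 this
      linarith
    have hqA : q ∉ A := by
      intro hqA
      obtain ⟨ε, hε, hball⟩ := Metric.isOpen_iff.1 hAo q hqA
      have : q + ε/2 ∈ A := hball (show dist (q + ε/2) q < ε by
        rw [Real.dist_eq, show q + ε/2 - q = ε/2 by ring,
          abs_of_nonneg (by linarith)]; linarith)
      have := le_csSup hAb.2 this
      linarith
    -- p, q not in s
    have hnotin : ∀ w, w ∈ closure A → w ∉ A → w ∉ s := by
      intro w hwc hwA hws
      have hnbhd : connectedComponentIn s w ∈ nhds w :=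
        (hs.connectedComponentIn).mem_nhds (mem_connectedComponentIn hws)
      obtain ⟨z, hz1, hz2⟩ := mem_closure_iff_nhds.1 hwc _ hnbhd
      have e1 := connectedComponentIn_eq hz1
      have e2 := connectedComponentIn_eq (show z ∈ connectedComponentIn s x from hz2)
      exact hwA (by rw [hA, e2, ← e1]; exact mem_connectedComponentIn hws)
    have hup : u p = 0 := h0 p (closure_mono hAs hpc) (hnotin p hpc hpA)
    have huq : u q = 0 := h0 q (closure_mono hAs hqc) (hnotin q hqc hqA)
    have hpq : p ≤ q := by
      obtain ⟨z, hz⟩ := hAne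
      exact le_trans (csInf_le hAb.1 hz) (le_csSup hAb.2 hz)
    have hAIoo : A = Set.Ioo p q := by
      apply subset_antisymm
      · intro z hz
        refine ⟨lt_of_le_of_ne (csInf_le hAb.1 hz) ?_, lt_of_le_of_ne (le_csSup hAb.2 hz) ?_⟩
        · rintro rfl; exact hpA hz
        · rintro rfl; exact hqA hz
      · rintro z ⟨hz1, hz2⟩
        obtain ⟨w1, hw1, hw1'⟩ := exists_lt_of_csInf_lt hAne hz1
        obtain ⟨w2, hw2, hw2'⟩ := exists_lt_of_lt_csSup hAne hz2
        have hord : A.OrdConnected := isPreconnected_connectedComponentIn.ordConnected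
        exact hord.out hw1 hw2 ⟨hw1'.le, hw2'.le⟩
    rw [hAIoo, ← integral_Ioc_eq_integral_Ioo, ← intervalIntegral.integral_of_le hpq]
    rw [intervalIntegral.integral_eq_sub_of_hasDerivAt (fun z _ => hu z)
      (hu'.intervalIntegrable p q)]
    rw [hup, huq, sub_zero]
  calc ∫ x in s, u' x = ∫ x in ⋃ (t : T), (t : Set ℝ), u' x := by rw [hUnion]
    _ = ∑' t : T, ∫ x in (t : Set ℝ), u' x := by
        refine integral_iUnion (fun t => (hopen t t.2).measurableSet) ?_ (by rwa [hUnion])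
        intro t₁ t₂ hne12
        exact hdisj t₁.2 t₂.2 (fun h => hne12 (Subtype.ext h))
    _ = 0 := by simp [key]

lemma twoD_fst (Ω : Set (ℝ × ℝ)) (hΩo : IsOpen Ω)
    (hΩb : Ω ⊆ Set.Icc ((0:ℝ), (0:ℝ)) (1, 1))
    (h : ℝ × ℝ → ℂ) (hh : ContDiff ℝ (⊤ : ℕ∞) h)
    (h0 : ∀ r ∈ frontier Ω, h r = 0) :
    ∫ r in Ω, fderiv ℝ h r (1, 0) = 0 := by
  have hdiff : Differentiable ℝ h := hh.differentiable (by simp)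
  have hcont : Continuous fun r => fderiv ℝ h r (1, 0) :=
    (hh.continuous_fderiv (by simp)).clm_apply continuous_const
  have hintOn : IntegrableOn (fun r => fderiv ℝ h r (1, 0)) Ω := by
    exact (hcont.continuousOn.integrableOn_compact isCompact_Icc).mono_set hΩb
  set F : ℝ × ℝ → ℂ := Ω.indicator (fun r => fderiv ℝ h r (1, 0)) with hF
  have hFint : Integrable F := hintOn.integrable_indicator hΩo.measurableSet
  rw [← integral_indicator hΩo.measurableSet, ← hF]
  rw [Measure.volume_eq_prod] at hFint ⊢
  rw [integral_prod_symm F hFint]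
  have inner : ∀ y : ℝ, (∫ x : ℝ, F (x, y)) = 0 := by
    intro y
    set s : Set ℝ := {x | (x, y) ∈ Ω} with hsdef
    have hsopen : IsOpen s := hΩo.preimage (Continuous.prodMk_left y)
    have hsb : s ⊆ Set.Icc 0 1 := fun x hx => ⟨(hΩb hx).1.1, (hΩb hx).2.1⟩
    have hFsl : ∀ x : ℝ, F (x, y) = s.indicator (fun x => fderiv ℝ h (x, y) (1, 0)) x := by
      intro x
      by_cases hx : (x, y) ∈ Ω <;> simp [hF, Set.indicator, hx, hsdef]
    simp_rw [hFsl]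
    rw [integral_indicator hsopen.measurableSet]
    refine oneD s hsopen hsb (fun x => h (x, y)) (fun x => fderiv ℝ h (x, y) (1, 0)) ?_ ?_ ?_
    · intro x
      have hline : HasDerivAt (fun x : ℝ => ((x, y) : ℝ × ℝ)) (1, 0) x :=
        (hasDerivAt_id x).prodMk (hasDerivAt_const x y)
      exact (hdiff (x, y)).hasFDerivAt.comp_hasDerivAt x hline
    · exact hcont.comp (Continuous.prodMk_left y)
    · intro x hxc hxs
      apply h0
      have h1 : (x, y) ∈ closure Ω :=
        (Continuous.prodMk_left y).closure_preimage_subset Ω hxc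
      have h2 : (x, y) ∉ Ω := hxs
      exact ⟨h1, fun hmem => h2 (interior_subset (hΩo.interior_eq ▸ hmem))⟩
  simp_rw [inner]
  simp

lemma twoD_snd (Ω : Set (ℝ × ℝ)) (hΩo : IsOpen Ω)
    (hΩb : Ω ⊆ Set.Icc ((0:ℝ), (0:ℝ)) (1, 1))
    (h : ℝ × ℝ → ℂ) (hh : ContDiff ℝ (⊤ : ℕ∞) h)
    (h0 : ∀ r ∈ frontier Ω, h r = 0) :
    ∫ r in Ω, fderiv ℝ h r (0, 1) = 0 := by
  have hdiff : Differentiable ℝ h := hh.differentiable (by simp)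
  have hcont : Continuous fun r => fderiv ℝ h r (0, 1) :=
    (hh.continuous_fderiv (by simp)).clm_apply continuous_const
  have hintOn : IntegrableOn (fun r => fderiv ℝ h r (0, 1)) Ω := by
    exact (hcont.continuousOn.integrableOn_compact isCompact_Icc).mono_set hΩb
  set F : ℝ × ℝ → ℂ := Ω.indicator (fun r => fderiv ℝ h r (0, 1)) with hF
  have hFint : Integrable F := hintOn.integrable_indicator hΩo.measurableSet
  rw [← integral_indicator hΩo.measurableSet, ← hF]
  rw [Measure.volume_eq_prod] at hFint ⊢
  rw [integral_prod F hFint]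
  have inner : ∀ x : ℝ, (∫ y : ℝ, F (x, y)) = 0 := by
    intro x
    set s : Set ℝ := {y | (x, y) ∈ Ω} with hsdef
    have hsopen : IsOpen s := hΩo.preimage (Continuous.prodMk_right x)
    have hsb : s ⊆ Set.Icc 0 1 := fun y hy => ⟨(hΩb hy).1.2, (hΩb hy).2.2⟩
    have hFsl : ∀ y : ℝ, F (x, y) = s.indicator (fun y => fderiv ℝ h (x, y) (0, 1)) y := by
      intro y
      by_cases hy : (x, y) ∈ Ω <;> simp [hF, Set.indicator, hy, hsdef]
    simp_rw [hFsl]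
    rw [integral_indicator hsopen.measurableSet]
    refine oneD s hsopen hsb (fun y => h (x, y)) (fun y => fderiv ℝ h (x, y) (0, 1)) ?_ ?_ ?_
    · intro y
      have hline : HasDerivAt (fun y : ℝ => ((x, y) : ℝ × ℝ)) (0, 1) y :=
        (hasDerivAt_const y x).prodMk (hasDerivAt_id y)
      exact (hdiff (x, y)).hasFDerivAt.comp_hasDerivAt y hline
    · exact hcont.comp (Continuous.prodMk_right x)
    · intro y hyc hys
      apply h0
      have h1 : (x, y) ∈ closure Ω :=
        (Continuous.prodMk_right x).closure_preimage_subset Ω hyc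
      exact ⟨h1, fun hmem => hys (show (x, y) ∈ Ω from interior_subset hmem)⟩
  simp_rw [inner]
  simp

lemma intDop (Ω : Set (ℝ × ℝ)) (hΩo : IsOpen Ω)
    (hΩb : Ω ⊆ Set.Icc ((0:ℝ), (0:ℝ)) (1, 1)) (a b : ℂ)
    (h : ℝ × ℝ → ℂ) (hh : ContDiff ℝ (⊤ : ℕ∞) h)
    (h0 : ∀ r ∈ frontier Ω, h r = 0) :
    ∫ r in Ω, (a * fderiv ℝ h r (1, 0) + b * fderiv ℝ h r (0, 1)) = 0 := by
  have hc1 : Continuous fun r => fderiv ℝ h r (1, 0) :=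
    (hh.continuous_fderiv (by simp)).clm_apply continuous_const
  have hc2 : Continuous fun r => fderiv ℝ h r (0, 1) :=
    (hh.continuous_fderiv (by simp)).clm_apply continuous_const
  have hi1 : IntegrableOn (fun r => a * fderiv ℝ h r (1, 0)) Ω :=
    ((continuous_const.mul hc1).continuousOn.integrableOn_compact isCompact_Icc).mono_set hΩb
  have hi2 : IntegrableOn (fun r => b * fderiv ℝ h r (0, 1)) Ω :=
    ((continuous_const.mul hc2).continuousOn.integrableOn_compact isCompact_Icc).mono_set hΩb
  rw [integral_add hi1 hi2, integral_const_mul, integral_const_mul,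
    twoD_fst Ω hΩo hΩb h hh h0, twoD_snd Ω hΩo hΩb h hh h0]
  ring

lemma part1 (Ω : Set (ℝ × ℝ)) (hΩo : IsOpen Ω)
    (hΩb : Ω ⊆ Set.Icc ((0:ℝ), (0:ℝ)) (1, 1))
    (g : ℝ × ℝ → ℂ) (hg : ContDiff ℝ (⊤ : ℕ∞) g) (a b : ℂ)
    (hDg : ∃ U : Set (ℝ × ℝ), IsOpen U ∧ closure Ω ⊆ U ∧ ∀ r ∈ U, Dop a b g r = 0)
    (μ : AddMonoidAlgebra ℂ (ℤ × ℤ))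
    (hμ : ∀ r ∈ frontier Ω, trigEval μ r = 0)
    (φ : ℝ × ℝ → ℂ) (hφ : ContDiff ℝ (⊤ : ℕ∞) φ) :
    ∫ r in Ω, g r * Dop a b (fun s => trigEval μ s * φ s) r = 0 := by
  set w : ℝ × ℝ → ℂ := fun s => trigEval μ s * φ s with hwdef
  have hw : ContDiff ℝ (⊤ : ℕ∞) w := (trig_contDiff μ).mul hφ
  have hh : ContDiff ℝ (⊤ : ℕ∞) (fun r => g r * w r) := hg.mul hw
  obtain ⟨U, hUo, hUc, hU0⟩ := hDg
  have heq : Set.EqOn (fun r => g r * Dop a b w r)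
      (fun r => a * fderiv ℝ (fun r => g r * w r) r (1, 0) +
        b * fderiv ℝ (fun r => g r * w r) r (0, 1)) Ω := by
    intro r hr
    have hDgr : Dop a b g r = 0 := hU0 r (hUc (subset_closure hr))
    have hdg : DifferentiableAt ℝ g r := (hg.differentiable (by simp)) r
    have hdw : DifferentiableAt ℝ w r := (hw.differentiable (by simp)) r
    have hf : fderiv ℝ (fun r => g r * w r) r
        = g r • fderiv ℝ w r + w r • fderiv ℝ g r := fderiv_mul hdg hdw
    simp only [hf, ContinuousLinearMap.add_apply, ContinuousLinearMap.smul_apply, smul_eq_mul]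
    simp only [Dop] at hDgr ⊢
    linear_combination (-(w r)) * hDgr
  calc ∫ r in Ω, g r * Dop a b w r
      = ∫ r in Ω, (a * fderiv ℝ (fun r => g r * w r) r (1, 0) +
        b * fderiv ℝ (fun r => g r * w r) r (0, 1)) :=
        setIntegral_congr_fun hΩo.measurableSet heq
    _ = 0 := intDop Ω hΩo hΩb a b _ hh (fun r hr => by
        simp only [hwdef, hμ r hr, zero_mul, mul_zero])

section part2
variable (Ω : Set (ℝ × ℝ)) (g : ℝ × ℝ → ℂ) (a b : ℂ)
  (μ : AddMonoidAlgebra ℂ (ℤ × ℤ)) (ω : ℝ × ℝ)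

noncomputable def al (k : ℤ × ℤ) : ℂ := 2 * Real.pi * Complex.I * k.1 - Complex.I * ω.1
noncomputable def be (k : ℤ × ℤ) : ℂ := 2 * Real.pi * Complex.I * k.2 - Complex.I * ω.2

lemma funeq : (fun s : ℝ × ℝ => trigEval μ s *
      Complex.exp (-Complex.I * (ω.1 * s.1 + ω.2 * s.2))) =
    fun s : ℝ × ℝ => ∑ k ∈ μ.coeff.support, μ.coeff k * Complex.exp (al ω k * s.1 + be ω k * s.2) := by
  funext s
  simp only [trigEval, Finset.sum_mul]
  refine Finset.sum_congr rfl fun k _ => ?_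
  rw [mul_assoc, ← Complex.exp_add]
  congr 1
  simp only [al, be]
  ring

lemma DopEq (r : ℝ × ℝ) : Dop a b (fun s : ℝ × ℝ => trigEval μ s *
      Complex.exp (-Complex.I * (ω.1 * s.1 + ω.2 * s.2))) r =
    ∑ k ∈ μ.coeff.support, μ.coeff k * Complex.exp (al ω k * r.1 + be ω k * r.2) *
      (a * al ω k + b * be ω k) := by
  have hder : HasFDerivAt
      (fun s : ℝ × ℝ => ∑ k ∈ μ.coeff.support, μ.coeff k * Complex.exp (al ω k * s.1 + be ω k * s.2))
      (∑ k ∈ μ.coeff.support, μ.coeff k • (Complex.exp (al ω k * r.1 + be ω k * r.2) •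
        expCLM (al ω k) (be ω k))) r :=
    HasFDerivAt.fun_sum fun k _ => (expo_hasFDerivAt (al ω k) (be ω k) r).const_mul (μ.coeff k)
  simp only [Dop]
  rw [funeq μ ω, hder.fderiv]
  simp only [ContinuousLinearMap.sum_apply, ContinuousLinearMap.smul_apply, smul_eq_mul,
    expCLM_apply, Complex.ofReal_one, Complex.ofReal_zero, mul_one, mul_zero, add_zero, zero_add]
  rw [Finset.mul_sum, Finset.mul_sum, ← Finset.sum_add_distrib]
  exact Finset.sum_congr rfl fun k _ => by ring
end part2

lemma exp_cont (α β : ℂ) : Continuous (fun r : ℝ × ℝ => Complex.exp (α * r.1 + β * r.2)) :=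
  Complex.continuous_exp.comp
    ((continuous_const.mul (Complex.continuous_ofReal.comp continuous_fst)).add
      (continuous_const.mul (Complex.continuous_ofReal.comp continuous_snd)))

theorem convSum
    (Ω : Set (ℝ × ℝ)) (hΩo : IsOpen Ω) (hΩb : Ω ⊆ Set.Icc ((0:ℝ), (0:ℝ)) (1, 1))
    (g : ℝ × ℝ → ℂ) (hg : ContDiff ℝ (⊤ : ℕ∞) g) (a b : ℂ)
    (hDg : ∃ U : Set (ℝ × ℝ), IsOpen U ∧ closure Ω ⊆ U ∧ ∀ r ∈ U, Dop a b g r = 0)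
    (μ : AddMonoidAlgebra ℂ (ℤ × ℤ))
    (hμ : ∀ r ∈ frontier Ω, trigEval μ r = 0) :
    (∀ ω : ℝ × ℝ,
      ∑ k ∈ μ.coeff.support, μ.coeff k *
        hatDf a b g Ω (ω.1 - 2 * Real.pi * k.1, ω.2 - 2 * Real.pi * k.2) = 0) := by
  intro ω
  have hφ : ContDiff ℝ (⊤ : ℕ∞) (fun s : ℝ × ℝ => Complex.exp (-Complex.I * (ω.1 * s.1 + ω.2 * s.2))) :=
    Complex.contDiff_exp.comp
      (contDiff_const.mul ((contDiff_const.mul coord1_contDiff).add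
        (contDiff_const.mul coord2_contDiff)))
  have hP := part1 Ω hΩo hΩb g hg a b hDg μ hμ _ hφ
  -- rewrite the integrand using DopEq
  have hptwise : ∀ r : ℝ × ℝ, g r * Dop a b (fun s : ℝ × ℝ => trigEval μ s *
        Complex.exp (-Complex.I * (ω.1 * s.1 + ω.2 * s.2))) r =
      ∑ k ∈ μ.coeff.support, (μ.coeff k * (a * al ω k + b * be ω k)) *
        (g r * Complex.exp (al ω k * r.1 + be ω k * r.2)) := by
    intro r
    rw [DopEq a b μ ω r, Finset.mul_sum]
    exact Finset.sum_congr rfl fun k _ => by ring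
  have hintk : ∀ k : ℤ × ℤ, IntegrableOn
      (fun r : ℝ × ℝ => (μ.coeff k * (a * al ω k + b * be ω k)) *
        (g r * Complex.exp (al ω k * r.1 + be ω k * r.2))) Ω := by
    intro k
    exact (((continuous_const.mul (hg.continuous.mul
      (exp_cont _ _))).continuousOn).integrableOn_compact isCompact_Icc).mono_set hΩb
  have hsum : ∑ k ∈ μ.coeff.support, (μ.coeff k * (a * al ω k + b * be ω k)) *
      (∫ r in Ω, g r * Complex.exp (al ω k * r.1 + be ω k * r.2)) = 0 := by
    rw [← hP]
    simp_rw [hptwise]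
    rw [integral_finset_sum _ fun k _ => hintk k]
    exact Finset.sum_congr rfl fun k _ => (integral_const_mul _ _).symm
  have hterm : ∀ k ∈ μ.coeff.support, μ.coeff k *
      hatDf a b g Ω (ω.1 - 2 * Real.pi * k.1, ω.2 - 2 * Real.pi * k.2) =
      -((μ.coeff k * (a * al ω k + b * be ω k)) *
        (∫ r in Ω, g r * Complex.exp (al ω k * r.1 + be ω k * r.2))) := by
    intro k _
    have hexp : ∀ r : ℝ × ℝ, Complex.exp (-Complex.I *
        (((ω.1 - 2 * Real.pi * k.1 : ℝ) : ℂ) * r.1 + ((ω.2 - 2 * Real.pi * k.2 : ℝ) : ℂ) * r.2))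
        = Complex.exp (al ω k * r.1 + be ω k * r.2) := by
      intro r
      congr 1
      simp only [al, be]
      push_cast
      ring
    have h1 : hatDf a b g Ω (ω.1 - 2 * Real.pi * k.1, ω.2 - 2 * Real.pi * k.2) =
        Complex.I * (a * ((ω.1 - 2 * Real.pi * k.1 : ℝ) : ℂ) +
          b * ((ω.2 - 2 * Real.pi * k.2 : ℝ) : ℂ)) *
        ∫ r in Ω, g r * Complex.exp (al ω k * r.1 + be ω k * r.2) := by
      simp only [hatDf]
      congr 1
      exact integral_congr_ae (Filter.Eventually.of_forall fun r => by simp only [hexp r])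
    rw [h1]
    have hC : Complex.I * (a * ((ω.1 - 2 * Real.pi * k.1 : ℝ) : ℂ) +
        b * ((ω.2 - 2 * Real.pi * k.2 : ℝ) : ℂ)) = -(a * al ω k + b * be ω k) := by
      simp only [al, be]
      push_cast
      ring
    rw [hC]
    ring
  rw [Finset.sum_congr rfl hterm, Finset.sum_neg_distrib, hsum, neg_zero]



/-- **Annihilation for piecewise smooth pieces, first order.**
Let `f = g·χ_Ω` with `g` smooth, `D = a∂ₓ + b∂_y` with `Dg = 0` on a neighborhood of
`Ω`, and let the trigonometric polynomial `μ` vanish on `∂Ω`. Then `μ·Df = 0` as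
distributions (i.e. `⟨Df, μφ⟩ = -∫_Ω g·D(μφ) = 0` for every smooth test function `φ`),
and hence the Fourier coefficients `c[k] = μ.coeff k` annihilate `(Df)^` by convolution:
`∑_{k∈Λ} c[k] (Df)^(ω − 2πk) = 0` for all `ω`. -/
theorem annihilation_first_order_piecewise
    (Ω : Set (ℝ × ℝ)) (hΩ : IsPSRegion Ω)
    (g : ℝ × ℝ → ℂ) (hg : ContDiff ℝ (⊤ : ℕ∞) g) (a b : ℂ)
    (hDg : ∃ U : Set (ℝ × ℝ), IsOpen U ∧ closure Ω ⊆ U ∧ ∀ r ∈ U, Dop a b g r = 0)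
    (μ : AddMonoidAlgebra ℂ (ℤ × ℤ))
    (hμ : ∀ r ∈ frontier Ω, trigEval μ r = 0) :
    (∀ φ : ℝ × ℝ → ℂ, ContDiff ℝ (⊤ : ℕ∞) φ →
        ∫ r in Ω, g r * Dop a b (fun s => trigEval μ s * φ s) r = 0) ∧
    (∀ ω : ℝ × ℝ,
      ∑ k ∈ μ.coeff.support, μ.coeff k *
        hatDf a b g Ω (ω.1 - 2 * Real.pi * k.1, ω.2 - 2 * Real.pi * k.2) = 0) := by
  obtain ⟨hΩo, hΩb, -, -⟩ := hΩ
  refine ⟨fun φ hφ => part1 Ω hΩo hΩb g hg a b hDg μ hμ φ hφ,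
    convSum Ω hΩo hΩb g hg a b hDg μ hμ⟩
end

section
/- If a nonzero trigonometric polynomial μ with rectangular coefficient support Λ' ⊊ Λ satisfies the annihilation system T[f̂]·d = 0 (where d is the coefficient vector of μ), then for any trigonometric polynomial γ such that ν = μ·γ has coefficients supported within Λ, the coefficient vector e = d ∗ g of ν also satisfies T[f̂]·e = 0. Consequently, if Λ strictly contains the support of the minimal annihilating polynomial, the Toeplitz-structured matrix T[f̂] has nontrivial nullspace of dimension at least the number of integer translates of Λ' contained in Λ, and in particular T[f̂] is rank-deficient. -/
lemma OFRD_mul_apply_right (f g : AddMonoidAlgebra ℂ (ℤ×ℤ)) (x : ℤ×ℤ) :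
    (f*g).coeff x = ∑ a ∈ g.coeff.support, f.coeff (x - a) * g.coeff a := by
  classical
  rw [AddMonoidAlgebra.coeff_mul]
  simp only [Finsupp.sum]
  rw [Finset.sum_comm]
  refine Finset.sum_congr rfl fun a _ => ?_
  have hiff : ∀ m₁ : ℤ×ℤ, (m₁ + a = x ↔ m₁ = x - a) := fun m₁ => eq_sub_iff_add_eq.symm
  simp_rw [hiff]
  rw [Finset.sum_ite_eq']
  split_ifs with h
  · rfl
  · rw [Finsupp.notMem_support_iff.1 h, zero_mul]

lemma OFRD_exists_lex_max (S : Finset (ℤ × ℤ)) (hS : S.Nonempty) :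
    ∃ a ∈ S, ∀ x ∈ S, x.1 ≤ a.1 ∧ (x.1 = a.1 → x.2 ≤ a.2) := by
  obtain ⟨a1, ha1S, ha1⟩ := S.exists_max_image Prod.fst hS
  have hS' : (S.filter (fun x => x.1 = a1.1)).Nonempty :=
    ⟨a1, Finset.mem_filter.2 ⟨ha1S, rfl⟩⟩
  obtain ⟨a, haS', ha⟩ := (S.filter (fun x => x.1 = a1.1)).exists_max_image Prod.snd hS'
  rw [Finset.mem_filter] at haS'
  refine ⟨a, haS'.1, fun x hx => ⟨haS'.2 ▸ ha1 x hx, fun hx1 => ?_⟩⟩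
  exact ha x (Finset.mem_filter.2 ⟨hx, hx1.trans haS'.2⟩)

lemma OFRD_conv_corner (c : ℤ×ℤ → ℤ×ℤ) (hadd : ∀ u v, c (u+v) = c u + c v)
    (hinj : Function.Injective c)
    (p q : AddMonoidAlgebra ℂ (ℤ×ℤ)) (hp : p ≠ 0) (hq : q ≠ 0) :
    ∃ a ∈ p.coeff.support, ∃ b ∈ q.coeff.support,
      (∀ x ∈ p.coeff.support, (c x).1 ≤ (c a).1 ∧ ((c x).1 = (c a).1 → (c x).2 ≤ (c a).2)) ∧
      (∀ x ∈ q.coeff.support, (c x).1 ≤ (c b).1 ∧ ((c x).1 = (c b).1 → (c x).2 ≤ (c b).2)) ∧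
      a + b ∈ (p * q).coeff.support := by
  classical
  obtain ⟨ca, hcaS, hcamax⟩ := OFRD_exists_lex_max (p.coeff.support.image c)
    ((Finsupp.support_nonempty_iff.2 (mt AddMonoidAlgebra.coeff_eq_zero.1 hp)).image c)
  obtain ⟨a, haS, rfl⟩ := Finset.mem_image.1 hcaS
  obtain ⟨cb, hcbS, hcbmax⟩ := OFRD_exists_lex_max (q.coeff.support.image c)
    ((Finsupp.support_nonempty_iff.2 (mt AddMonoidAlgebra.coeff_eq_zero.1 hq)).image c)
  obtain ⟨b, hbS, rfl⟩ := Finset.mem_image.1 hcbS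
  refine ⟨a, haS, b, hbS,
    fun x hx => hcamax _ (Finset.mem_image_of_mem c hx),
    fun x hx => hcbmax _ (Finset.mem_image_of_mem c hx), ?_⟩
  rw [Finsupp.mem_support_iff]
  have key : (p*q).coeff (a+b) = p.coeff a * q.coeff b := by
    rw [AddMonoidAlgebra.mul_apply, Finsupp.sum, Finset.sum_eq_single a]
    · rw [Finsupp.sum, Finset.sum_eq_single b]
      · exact if_pos rfl
      · intro a₂ ha₂ hne
        exact if_neg (fun h => hne (add_left_cancel h))
      · intro h; exact absurd hbS h
    · intro a₁ ha₁ hne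
      rw [Finsupp.sum]; apply Finset.sum_eq_zero; intro a₂ ha₂
      by_cases h : a₁ + a₂ = a + b
      · exfalso
        have e : c a₁ + c a₂ = c a + c b := by rw [← hadd, ← hadd, h]
        have h1 := hcamax _ (Finset.mem_image_of_mem c ha₁)
        have h2 := hcbmax _ (Finset.mem_image_of_mem c ha₂)
        rw [Prod.ext_iff] at e
        simp only [Prod.fst_add, Prod.snd_add] at e
        have f1 : (c a₁).1 = (c a).1 := by omega
        have f2 : (c a₂).1 = (c b).1 := by omega
        have g1 := h1.2 f1
        have g2 := h2.2 f2
        exact hne (hinj (Prod.ext f1 (by omega)))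
      · exact if_neg h
    · intro h; exact absurd haS h
  rw [key]
  exact mul_ne_zero (Finsupp.mem_support_iff.1 haS) (Finsupp.mem_support_iff.1 hbS)



open MeasureTheory

/-- The rectangle `[0, K) × [0, L)` of lattice points. -/
noncomputable def rect (K L : ℕ) : Finset (ℤ × ℤ) :=
  Finset.Ico (0:ℤ) (K:ℤ) ×ˢ Finset.Ico (0:ℤ) (L:ℤ)

/-- The valid shifts `l` for a filter of size `(A, B)` on the `(Kg, Lg)` sample grid
`[0, Kg) × [0, Lg)`: those `l` with `l - Λ` inside the grid. -/
noncomputable def shifts (A B Kg Lg : ℕ) : Finset (ℤ × ℤ) :=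
  Finset.Icc ((A:ℤ) - 1) ((Kg:ℤ) - 1) ×ˢ Finset.Icc ((B:ℤ) - 1) ((Lg:ℤ) - 1)

/-- The block-Toeplitz annihilation matrix `T[f̂] = [T_x[f̂]; T_y[f̂]]`: rows are indexed
by a shift `l ∈ S` together with a choice of derivative (`x` or `y`), columns by filter
locations `k ∈ Λ`, with entries the samples `-i·2π(l−k)₁,₂ · f̂(l−k)` of
`(f_x)^, (f_y)^`. -/
noncomputable def Tmat (fhat : ℤ × ℤ → ℂ) (S Λ : Finset (ℤ × ℤ)) :
    Matrix (S × Fin 2) Λ ℂ :=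
  fun li k =>
    if li.2 = 0 then
      (-Complex.I * (2 * Real.pi * (((li.1 : ℤ × ℤ) - (k : ℤ × ℤ)).1 : ℤ))) *
        fhat ((li.1 : ℤ × ℤ) - (k : ℤ × ℤ))
    else
      (-Complex.I * (2 * Real.pi * (((li.1 : ℤ × ℤ) - (k : ℤ × ℤ)).2 : ℤ))) *
        fhat ((li.1 : ℤ × ℤ) - (k : ℤ × ℤ))

noncomputable def OFRD_acoef (fhat : ℤ × ℤ → ℂ) (i : Fin 2) (m : ℤ × ℤ) : ℂ :=
  if i = 0 then (-Complex.I * (2 * Real.pi * (m.1 : ℤ))) * fhat m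
  else (-Complex.I * (2 * Real.pi * (m.2 : ℤ))) * fhat m

lemma OFRD_Tmat_eq (fhat : ℤ × ℤ → ℂ) (S Λ : Finset (ℤ × ℤ)) (li : S × Fin 2) (k : Λ) :
    Tmat fhat S Λ li k = OFRD_acoef fhat li.2 ((li.1 : ℤ × ℤ) - (k : ℤ × ℤ)) := rfl

lemma OFRD_mem_rect {K L : ℕ} {k : ℤ × ℤ} :
    k ∈ rect K L ↔ 0 ≤ k.1 ∧ k.1 < (K:ℤ) ∧ 0 ≤ k.2 ∧ k.2 < (L:ℤ) := by
  simp [rect, Finset.mem_product, Finset.mem_Ico, and_assoc]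

lemma OFRD_mem_shifts {A B Kg Lg : ℕ} {l : ℤ × ℤ} :
    l ∈ shifts A B Kg Lg ↔
      (A:ℤ) - 1 ≤ l.1 ∧ l.1 ≤ (Kg:ℤ) - 1 ∧ (B:ℤ) - 1 ≤ l.2 ∧ l.2 ≤ (Lg:ℤ) - 1 := by
  simp [shifts, Finset.mem_product, Finset.mem_Icc, and_assoc]

/-- **Oversized filters give a rank-deficient annihilation matrix.**
Suppose the nonzero trigonometric polynomial `μ` has rectangular coefficient support
`Λ' = [0,K₁) × [0,L₁)` (exactly filling that rectangle), strictly contained in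
`Λ = [0,K₂) × [0,L₂)`, and that `μ`'s coefficient vector satisfies the annihilation
system `T[f̂]·d = 0` built with filter size `Λ'` on the `(Kg, Lg)` sample grid. Then for
every trigonometric polynomial `γ` such that `ν = μ·γ` has coefficients supported in
`Λ`, the coefficient vector of `ν` satisfies the `Λ`-sized system `T[f̂]·e = 0`.
Consequently the nullspace of the `Λ`-sized matrix `T[f̂]` has dimension at least
`(K₂−K₁+1)(L₂−L₁+1)`, the number of integer translates of `Λ'` inside `Λ`, and in
particular `T[f̂]` is rank-deficient. -/
theorem oversized_filter_rank_deficient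
    (fhat : ℤ × ℤ → ℂ) (K₁ L₁ K₂ L₂ Kg Lg : ℕ)
    (hK₁ : 0 < K₁) (hL₁ : 0 < L₁)
    (hKle : K₁ ≤ K₂) (hLle : L₁ ≤ L₂) (hstrict : K₁ < K₂ ∨ L₁ < L₂)
    (hKg : K₂ ≤ Kg) (hLg : L₂ ≤ Lg)
    (μ : AddMonoidAlgebra ℂ (ℤ × ℤ)) (hμ0 : μ ≠ 0)
    (hsupp : (μ.coeff.support : Set (ℤ × ℤ)) ⊆ (rect K₁ L₁ : Set (ℤ × ℤ)))
    (hfull : tdeg μ = ((K₁:ℤ), (L₁:ℤ)))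
    (hx0 : ∃ k ∈ μ.coeff.support, k.1 = 0) (hy0 : ∃ k ∈ μ.coeff.support, k.2 = 0)
    (hann : Matrix.mulVec (Tmat fhat (shifts K₁ L₁ Kg Lg) (rect K₁ L₁))
      (fun k => μ.coeff (k : ℤ × ℤ)) = 0) :
    (∀ γ : AddMonoidAlgebra ℂ (ℤ × ℤ),
      ((μ * γ).coeff.support : Set (ℤ × ℤ)) ⊆ (rect K₂ L₂ : Set (ℤ × ℤ)) →
      Matrix.mulVec (Tmat fhat (shifts K₂ L₂ Kg Lg) (rect K₂ L₂))
        (fun k => (μ * γ).coeff (k : ℤ × ℤ)) = 0) ∧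
    (K₂ - K₁ + 1) * (L₂ - L₁ + 1) ≤
      Module.finrank ℂ
        (LinearMap.ker (Matrix.mulVecLin (Tmat fhat (shifts K₂ L₂ Kg Lg) (rect K₂ L₂)))) ∧
    Matrix.rank (Tmat fhat (shifts K₂ L₂ Kg Lg) (rect K₂ L₂)) < (rect K₂ L₂).card := by
  classical
  -- basic facts about the support of μ
  have hμb : ∀ x ∈ μ.coeff.support, 0 ≤ x.1 ∧ x.1 ≤ (K₁:ℤ) - 1 ∧ 0 ≤ x.2 ∧ x.2 ≤ (L₁:ℤ) - 1 := by
    intro x hx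
    have := hsupp (Finset.mem_coe.2 hx)
    rw [Finset.mem_coe, OFRD_mem_rect] at this
    omega
  have hne : μ.coeff.support.Nonempty := Finsupp.support_nonempty_iff.2 (mt AddMonoidAlgebra.coeff_eq_zero.1 hμ0)
  -- the support attains the extreme first coordinate K₁ - 1
  have hKmax : ∃ x ∈ μ.coeff.support, x.1 = (K₁:ℤ) - 1 := by
    have hF : (μ.coeff.support.image Prod.fst).Nonempty := hne.image _
    have h1 : ((μ.coeff.support.image Prod.fst).max.unbotD 0)
        - ((μ.coeff.support.image Prod.fst).min.untopD 0) + 1 = (K₁:ℤ) :=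
      congrArg Prod.fst hfull
    rw [← Finset.coe_max' hF, ← Finset.coe_min' hF] at h1
    simp only [WithBot.unbotD_coe, WithTop.untopD_coe] at h1
    obtain ⟨x0, hx0m, hx01⟩ := hx0
    have hminle : (μ.coeff.support.image Prod.fst).min' hF ≤ 0 :=
      Finset.min'_le _ _ (Finset.mem_image.2 ⟨x0, hx0m, hx01⟩)
    have hminge : 0 ≤ (μ.coeff.support.image Prod.fst).min' hF := by
      obtain ⟨y, hy, hy1⟩ := Finset.mem_image.1 (Finset.min'_mem _ hF)
      have := hμb y hy; omega
    obtain ⟨z, hz, hz1⟩ := Finset.mem_image.1 (Finset.max'_mem _ hF)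
    exact ⟨z, hz, by omega⟩
  have hLmax : ∃ x ∈ μ.coeff.support, x.2 = (L₁:ℤ) - 1 := by
    have hF : (μ.coeff.support.image Prod.snd).Nonempty := hne.image _
    have h1 : ((μ.coeff.support.image Prod.snd).max.unbotD 0)
        - ((μ.coeff.support.image Prod.snd).min.untopD 0) + 1 = (L₁:ℤ) :=
      congrArg Prod.snd hfull
    rw [← Finset.coe_max' hF, ← Finset.coe_min' hF] at h1
    simp only [WithBot.unbotD_coe, WithTop.untopD_coe] at h1
    obtain ⟨y0, hy0m, hy01⟩ := hy0
    have hminle : (μ.coeff.support.image Prod.snd).min' hF ≤ 0 :=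
      Finset.min'_le _ _ (Finset.mem_image.2 ⟨y0, hy0m, hy01⟩)
    have hminge : 0 ≤ (μ.coeff.support.image Prod.snd).min' hF := by
      obtain ⟨y, hy, hy1⟩ := Finset.mem_image.1 (Finset.min'_mem _ hF)
      have := hμb y hy; omega
    obtain ⟨z, hz, hz1⟩ := Finset.mem_image.1 (Finset.max'_mem _ hF)
    exact ⟨z, hz, by omega⟩
  -- the annihilation hypothesis, in summation form
  have hann' : ∀ l ∈ shifts K₁ L₁ Kg Lg, ∀ i : Fin 2,
      ∑ k ∈ rect K₁ L₁, OFRD_acoef fhat i (l - k) * μ.coeff k = 0 := by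
    intro l hl i
    have h := congrFun hann (⟨l, hl⟩, i)
    simp only [Matrix.mulVec, dotProduct, Pi.zero_apply] at h
    rw [← Finset.sum_coe_sort (rect K₁ L₁) (fun k => OFRD_acoef fhat i (l - k) * μ.coeff k)]
    exact h
  -- shifted annihilation
  have shiftAnn : ∀ q : ℤ × ℤ, 0 ≤ q.1 → q.1 ≤ (K₂:ℤ) - K₁ → 0 ≤ q.2 → q.2 ≤ (L₂:ℤ) - L₁ →
      ∀ l ∈ shifts K₂ L₂ Kg Lg, ∀ i : Fin 2,
      ∑ k ∈ rect K₂ L₂, OFRD_acoef fhat i (l - k) * μ.coeff (k - q) = 0 := by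
    intro q hq1 hq2 hq3 hq4 l hl i
    rw [OFRD_mem_shifts] at hl
    have hT : ((rect K₁ L₁).image (· + q)) ⊆ rect K₂ L₂ := by
      intro k hk
      obtain ⟨j, hj, rfl⟩ := Finset.mem_image.1 hk
      rw [OFRD_mem_rect] at hj ⊢
      simp only [Prod.fst_add, Prod.snd_add]
      omega
    have hvan : ∀ k ∈ rect K₂ L₂, k ∉ (rect K₁ L₁).image (· + q) →
        OFRD_acoef fhat i (l - k) * μ.coeff (k - q) = 0 := by
      intro k _ hk
      have : μ.coeff (k - q) = 0 := by
        by_contra h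
        exact hk (Finset.mem_image.2 ⟨k - q,
          Finset.mem_coe.1 (hsupp (Finsupp.mem_support_iff.2 h)), by abel⟩)
      rw [this, mul_zero]
    rw [← Finset.sum_subset hT hvan,
      Finset.sum_image (fun x _ y _ h => by simpa using add_left_injective q h)]
    have heq : ∀ j ∈ rect K₁ L₁,
        OFRD_acoef fhat i (l - (j + q)) * μ.coeff (j + q - q)
          = OFRD_acoef fhat i ((l - q) - j) * μ.coeff j := by
      intro j _
      rw [add_sub_cancel_right, sub_add_eq_sub_sub_swap]
    rw [Finset.sum_congr rfl heq]
    exact hann' (l - q) (OFRD_mem_shifts.2 (by simp only [Prod.fst_sub, Prod.snd_sub]; omega)) i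
  -- support bound for cofactors γ
  have hγsupp : ∀ γ : AddMonoidAlgebra ℂ (ℤ × ℤ), γ ≠ 0 →
      ((μ * γ).coeff.support : Set (ℤ × ℤ)) ⊆ (rect K₂ L₂ : Set (ℤ × ℤ)) →
      ∀ s ∈ γ.coeff.support, 0 ≤ s.1 ∧ s.1 ≤ (K₂:ℤ) - K₁ ∧ 0 ≤ s.2 ∧ s.2 ≤ (L₂:ℤ) - L₁ := by
    intro γ hγ0 hsub s hs
    have hmem : ∀ x ∈ (μ * γ).coeff.support,
        0 ≤ x.1 ∧ x.1 < (K₂:ℤ) ∧ 0 ≤ x.2 ∧ x.2 < (L₂:ℤ) := by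
      intro x hx
      have := hsub (Finset.mem_coe.2 hx)
      rwa [Finset.mem_coe, OFRD_mem_rect] at this
    constructor
    · -- lower bound on s.1 : use c = neg
      obtain ⟨a, haS, b, hbS, hamax, hbmax, hab⟩ :=
        OFRD_conv_corner (fun u => -u) (fun u v => by simp [neg_add, add_comm]) neg_injective μ γ hμ0 hγ0
      have ha1 : a.1 = 0 := by
        obtain ⟨x0, hx0m, hx01⟩ := hx0
        have h1 := (hamax x0 hx0m).1
        have h2 := (hμb a haS).1
        simp only [Prod.fst_neg] at h1
        omega
      have hbs := (hbmax s hs).1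
      have := (hmem _ hab).1
      simp only [Prod.fst_neg, Prod.fst_add] at hbs this ⊢
      omega
    refine ⟨?_, ?_, ?_⟩
    · -- upper bound on s.1 : use c = id
      obtain ⟨a, haS, b, hbS, hamax, hbmax, hab⟩ :=
        OFRD_conv_corner id (fun u v => rfl) Function.injective_id μ γ hμ0 hγ0
      have ha1 : a.1 = (K₁:ℤ) - 1 := by
        obtain ⟨x0, hx0m, hx01⟩ := hKmax
        have h1 := (hamax x0 hx0m).1
        have h2 := (hμb a haS).2.1
        simp only [id] at h1
        omega
      have hbs := (hbmax s hs).1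
      have := (hmem _ hab).2.1
      simp only [id, Prod.fst_add] at hbs this ⊢
      omega
    · -- lower bound on s.2 : use c = neg ∘ swap
      obtain ⟨a, haS, b, hbS, hamax, hbmax, hab⟩ :=
        OFRD_conv_corner (fun u => -(u.swap)) (fun u v => by simp [Prod.swap_add, neg_add, add_comm])
          (fun u v h => Prod.swap_injective (neg_injective h)) μ γ hμ0 hγ0
      have ha1 : a.2 = 0 := by
        obtain ⟨x0, hx0m, hx01⟩ := hy0
        have h1 := (hamax x0 hx0m).1
        have h2 := (hμb a haS).2.2.1
        simp only [Prod.fst_neg, Prod.fst_swap] at h1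
        omega
      have hbs := (hbmax s hs).1
      have := (hmem _ hab).2.2.1
      simp only [Prod.fst_neg, Prod.fst_swap, Prod.snd_add] at hbs this ⊢
      omega
    · -- upper bound on s.2 : use c = swap
      obtain ⟨a, haS, b, hbS, hamax, hbmax, hab⟩ :=
        OFRD_conv_corner Prod.swap (fun u v => rfl) Prod.swap_injective μ γ hμ0 hγ0
      have ha1 : a.2 = (L₁:ℤ) - 1 := by
        obtain ⟨x0, hx0m, hx01⟩ := hLmax
        have h1 := (hamax x0 hx0m).1
        have h2 := (hμb a haS).2.2.2
        simp only [Prod.fst_swap] at h1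
        omega
      have hbs := (hbmax s hs).1
      have := (hmem _ hab).2.2.2
      simp only [Prod.fst_swap, Prod.snd_add] at hbs this ⊢
      omega
  -- Part 1
  have part1 : ∀ γ : AddMonoidAlgebra ℂ (ℤ × ℤ),
      ((μ * γ).coeff.support : Set (ℤ × ℤ)) ⊆ (rect K₂ L₂ : Set (ℤ × ℤ)) →
      Matrix.mulVec (Tmat fhat (shifts K₂ L₂ Kg Lg) (rect K₂ L₂))
        (fun k => (μ * γ).coeff (k : ℤ × ℤ)) = 0 := by
    intro γ hsub
    by_cases hγ0 : γ = 0
    · subst hγ0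
      funext li
      simp [Matrix.mulVec, dotProduct]
    funext li
    obtain ⟨⟨l, hl⟩, i⟩ := li
    simp only [Matrix.mulVec, dotProduct, Pi.zero_apply]
    have : ∑ k : (rect K₂ L₂ : Finset (ℤ × ℤ)),
        Tmat fhat (shifts K₂ L₂ Kg Lg) (rect K₂ L₂) (⟨l, hl⟩, i) k * (μ * γ).coeff (k : ℤ × ℤ)
        = ∑ k ∈ rect K₂ L₂, OFRD_acoef fhat i (l - k) * (μ * γ).coeff k :=
      Finset.sum_coe_sort (rect K₂ L₂) (fun k => OFRD_acoef fhat i (l - k) * (μ * γ).coeff k)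
    rw [this]
    calc ∑ k ∈ rect K₂ L₂, OFRD_acoef fhat i (l - k) * (μ * γ).coeff k
        = ∑ k ∈ rect K₂ L₂, ∑ q ∈ γ.coeff.support,
            OFRD_acoef fhat i (l - k) * μ.coeff (k - q) * γ.coeff q := by
          refine Finset.sum_congr rfl fun k _ => ?_
          rw [OFRD_mul_apply_right, Finset.mul_sum]
          exact Finset.sum_congr rfl fun q _ => (mul_assoc _ _ _).symm
      _ = ∑ q ∈ γ.coeff.support, ∑ k ∈ rect K₂ L₂,
            OFRD_acoef fhat i (l - k) * μ.coeff (k - q) * γ.coeff q := Finset.sum_comm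
      _ = 0 := by
          refine Finset.sum_eq_zero fun q hq => ?_
          rw [← Finset.sum_mul]
          obtain ⟨hq1, hq2, hq3, hq4⟩ := hγsupp γ hγ0 hsub q hq
          rw [shiftAnn q hq1 hq2 hq3 hq4 l hl i, zero_mul]
  have part2 : (K₂ - K₁ + 1) * (L₂ - L₁ + 1) ≤
      Module.finrank ℂ
        (LinearMap.ker (Matrix.mulVecLin (Tmat fhat (shifts K₂ L₂ Kg Lg) (rect K₂ L₂)))) := by
    set T₂ := Tmat fhat (shifts K₂ L₂ Kg Lg) (rect K₂ L₂) with hT₂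
    set R : Finset (ℤ × ℤ) := rect (K₂ - K₁ + 1) (L₂ - L₁ + 1) with hR
    have hRmem : ∀ m : ℤ × ℤ, m ∈ R →
        0 ≤ m.1 ∧ m.1 ≤ (K₂:ℤ) - K₁ ∧ 0 ≤ m.2 ∧ m.2 ≤ (L₂:ℤ) - L₁ := by
      intro m hm
      rw [hR, OFRD_mem_rect] at hm
      omega
    have hvker : ∀ m : ℤ × ℤ, m ∈ R →
        T₂.mulVecLin (fun k : (rect K₂ L₂ : Finset (ℤ × ℤ)) => μ.coeff ((k : ℤ × ℤ) - m)) = 0 := by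
      intro m hm
      obtain ⟨hm1, hm2, hm3, hm4⟩ := hRmem m hm
      funext li
      obtain ⟨⟨l, hl⟩, i⟩ := li
      simp only [Matrix.mulVecLin_apply, Matrix.mulVec, dotProduct, Pi.zero_apply]
      have : ∑ k : (rect K₂ L₂ : Finset (ℤ × ℤ)),
          T₂ (⟨l, hl⟩, i) k * μ.coeff ((k : ℤ × ℤ) - m)
          = ∑ k ∈ rect K₂ L₂, OFRD_acoef fhat i (l - k) * μ.coeff (k - m) :=
        Finset.sum_coe_sort (rect K₂ L₂) (fun k => OFRD_acoef fhat i (l - k) * μ.coeff (k - m))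
      rw [this]
      exact shiftAnn m hm1 hm2 hm3 hm4 l hl i
    -- the family of shifted copies of μ, as elements of the kernel
    set v : {x // x ∈ R} → ({x // x ∈ rect K₂ L₂} → ℂ) :=
      fun m k => μ.coeff ((k : ℤ × ℤ) - (m : ℤ × ℤ)) with hv
    have hvind : LinearIndependent ℂ v := by
      rw [Fintype.linearIndependent_iff]
      intro g hg
      by_contra hcon
      push_neg at hcon
      obtain ⟨m0, hm0⟩ := hcon
      have hSne : ((Finset.univ.filter (fun m : {x // x ∈ R} => g m ≠ 0)).image
          (fun m : R => (m : ℤ × ℤ))).Nonempty :=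
        ⟨(m0 : ℤ × ℤ), Finset.mem_image.2 ⟨m0, Finset.mem_filter.2 ⟨Finset.mem_univ _, hm0⟩, rfl⟩⟩
      obtain ⟨a, haS, hamax⟩ := OFRD_exists_lex_max _ hSne
      obtain ⟨ma, hma, hmaeq⟩ := Finset.mem_image.1 haS
      obtain ⟨b, hbS, hbmax⟩ := OFRD_exists_lex_max μ.coeff.support hne
      have hbb := hμb b hbS
      have haR := hRmem _ ma.2
      have hk : a + b ∈ rect K₂ L₂ := by
        rw [OFRD_mem_rect]
        rw [← hmaeq]
        simp only [Prod.fst_add, Prod.snd_add]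
        omega
      have hgk := congrFun hg (⟨a + b, hk⟩ : {x // x ∈ rect K₂ L₂})
      simp only [Finset.sum_apply, Pi.smul_apply, smul_eq_mul, Pi.zero_apply, hv] at hgk
      rw [Finset.sum_eq_single ma] at hgk
      · rw [hmaeq, add_sub_cancel_left] at hgk
        exact (mul_ne_zero (Finset.mem_filter.1 hma).2 (Finsupp.mem_support_iff.1 hbS)) hgk
      · intro m _ hmne
        by_cases hgm : g m = 0
        · rw [hgm, zero_mul]
        by_cases hμm : μ.coeff (a + b - (m : ℤ × ℤ)) = 0
        · rw [hμm, mul_zero]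
        exfalso
        have hmS : (m : ℤ × ℤ) ∈ (Finset.univ.filter (fun m : R => g m ≠ 0)).image
            (fun m : R => (m : ℤ × ℤ)) :=
          Finset.mem_image.2 ⟨m, Finset.mem_filter.2 ⟨Finset.mem_univ _, hgm⟩, rfl⟩
        have h1 := hamax _ hmS
        have h2 := hbmax _ (Finsupp.mem_support_iff.2 hμm)
        simp only [Prod.fst_sub, Prod.snd_sub, Prod.fst_add, Prod.snd_add] at h2
        have hf1 : (m : ℤ × ℤ).1 = a.1 := by omega
        have hf2 : (m : ℤ × ℤ).2 = a.2 := by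
          have := h1.2 hf1
          have := h2.2 (by omega)
          omega
        exact hmne (Subtype.ext ((Prod.ext hf1 hf2).trans hmaeq.symm))
      · intro h
        exact absurd (Finset.mem_univ ma) h
    -- transfer to the kernel
    have hvmem : ∀ m : {x // x ∈ R}, v m ∈ LinearMap.ker T₂.mulVecLin := fun m =>
      LinearMap.mem_ker.2 (hvker (m : ℤ × ℤ) m.2)
    set w : {x // x ∈ R} → LinearMap.ker T₂.mulVecLin := fun m => ⟨v m, hvmem m⟩ with hw
    have hwind : LinearIndependent ℂ w := by
      have hcomp : v = (LinearMap.ker T₂.mulVecLin).subtype ∘ w := rfl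
      exact LinearIndependent.of_comp _ (hcomp ▸ hvind)
    have hcard := hwind.fintype_card_le_finrank
    have hRcard : Fintype.card R = (K₂ - K₁ + 1) * (L₂ - L₁ + 1) := by
      rw [Fintype.card_coe, hR, rect, Finset.card_product]
      simp [Int.card_Ico]
    omega
  refine ⟨part1, part2, ?_⟩
  set T₂ := Tmat fhat (shifts K₂ L₂ Kg Lg) (rect K₂ L₂) with hT₂
  have h3 := LinearMap.finrank_range_add_finrank_ker T₂.mulVecLin
  rw [Module.finrank_fintype_fun_eq_card, Fintype.card_coe] at h3
  have hpos : 1 ≤ (K₂ - K₁ + 1) * (L₂ - L₁ + 1) := Nat.mul_pos (by omega) (by omega)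
  have hker : 1 ≤ Module.finrank ℂ (LinearMap.ker T₂.mulVecLin) := le_trans hpos part2
  rw [Matrix.rank]
  omega
end
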